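/- arXiv:math/0304040 — 2 statements merged into one kernel-verified Lean document; each statement's English description precedes it below -/
import Mathlib

section
/- Let R be a commutative ring and I an ideal of R. The set of elements f ∈ R satisfying an equation f^n + a_1 f^{n-1} + ... + a_n = 0 with a_i ∈ I^i for all i (the elements integrally dependent on I) forms an ideal of R, called the integral closure of I. -/
open Polynomial

/-- `f` is integrally dependent on the ideal `I`: it satisfies an equation
`f^n + a₁ f^(n-1) + ⋯ + aₙ = 0` with `aᵢ ∈ I^i`. -/
def IntegrallyDependent {R : Type*} [CommRing R] (I : Ideal R) (f : R) : Prop :=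
  ∃ n : ℕ, 0 < n ∧ ∃ a : ℕ → R,
    (∀ i ∈ Finset.Icc 1 n, a i ∈ I ^ i) ∧
    f ^ n + ∑ i ∈ Finset.Icc 1 n, a i * f ^ (n - i) = 0

lemma integrallyDependent_iff {R : Type*} [CommRing R] (I : Ideal R) (f : R) :
    IntegrallyDependent I f ↔
      (C f * X) ∈ integralClosure (reesAlgebra I) R[X] := by
  constructor
  · rintro ⟨n, hn, a, ha, heq⟩
    set b : ℕ → reesAlgebra I := fun i =>
      if h : i ∈ Finset.Icc 1 n then
        ⟨monomial i (a i), reesAlgebra.monomial_mem.mpr (ha i h)⟩ else 0 with hb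
    refine ⟨X ^ n + ∑ i ∈ Finset.Icc 1 n, C (b i) * X ^ (n - i), ?_, ?_⟩
    · apply monic_X_pow_add
      refine lt_of_le_of_lt (degree_sum_le _ _) ?_
      rw [Finset.sup_lt_iff (by exact_mod_cast WithBot.bot_lt_coe n)]
      intro i hi
      refine lt_of_le_of_lt (degree_C_mul_X_pow_le _ _) ?_
      simp only [Finset.mem_Icc] at hi
      exact_mod_cast Nat.sub_lt_of_pos_le hi.1 hi.2
    · rw [eval₂_add, eval₂_pow, eval₂_X, eval₂_finset_sum]
      have key : ∀ i ∈ Finset.Icc 1 n,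
          eval₂ (algebraMap (reesAlgebra I) R[X]) (C f * X) (C (b i) * X ^ (n - i)) =
          C (a i * f ^ (n - i)) * X ^ n := by
        intro i hi
        rw [eval₂_mul, eval₂_C, eval₂_pow, eval₂_X]
        have hbi : (algebraMap (reesAlgebra I) R[X]) (b i) = monomial i (a i) := by
          rw [hb]; simp only [dif_pos hi]; rfl
        simp only [Finset.mem_Icc] at hi
        rw [hbi, mul_pow, ← C_pow, ← C_mul_X_pow_eq_monomial, mul_mul_mul_comm, ← C_mul,
          ← pow_add, Nat.add_sub_cancel' hi.2]
      rw [Finset.sum_congr rfl key, ← Finset.sum_mul, mul_pow, ← C_pow,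
        ← add_mul, ← map_sum, ← map_add, heq, map_zero, zero_mul]
  · rintro ⟨p, hmonic, heval⟩
    set n := p.natDegree with hn
    rcases subsingleton_or_nontrivial R with hR | hR
    · exact ⟨1, one_pos, 0, fun i _ => Submodule.zero_mem _, Subsingleton.elim _ _⟩
    have hn0 : 0 < n := by
      rcases Nat.eq_zero_or_pos n with h0 | h; swap
      · exact h
      · exfalso
        have : p = 1 := (Polynomial.eq_one_of_monic_natDegree_zero hmonic h0)
        rw [this] at heval
        simp at heval
    refine ⟨n, hn0, fun i => ((p.coeff (n - i) : R[X])).coeff i, fun i hi => ?_, ?_⟩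
    · exact (p.coeff (n - i)).2 i
    · have h2 := congrArg (fun q => Polynomial.coeff q n) heval
      rw [eval₂_eq_sum_range] at h2
      simp only [Polynomial.coeff_zero, Polynomial.finset_sum_coeff] at h2
      have key : ∀ k ∈ Finset.range (n + 1),
          ((algebraMap (reesAlgebra I) R[X] (p.coeff k)) * (C f * X) ^ k).coeff n =
            ((p.coeff k : R[X])).coeff (n - k) * f ^ k := by
        intro k hk
        simp only [Finset.mem_range] at hk
        rw [mul_pow, ← C_pow, ← mul_assoc, coeff_mul_X_pow', if_pos (by omega),
          coeff_mul_C]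
        rfl
      rw [Finset.sum_congr rfl key] at h2
      rw [Finset.sum_range_succ] at h2
      have hlead : ((p.coeff n : R[X])).coeff (n - n) * f ^ n = f ^ n := by
        have : p.coeff n = 1 := hmonic.coeff_natDegree
        rw [this, Nat.sub_self]
        show ((1 : R[X])).coeff 0 * f ^ n = f ^ n
        simp
      rw [hlead] at h2
      have hsum : ∑ k ∈ Finset.range n, ((p.coeff k : R[X])).coeff (n - k) * f ^ k =
          ∑ i ∈ Finset.Icc 1 n, ((p.coeff (n - i) : R[X])).coeff i * f ^ (n - i) := by
        refine Finset.sum_nbij' (fun k => n - k) (fun i => n - i) ?_ ?_ ?_ ?_ ?_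
        · intro k hk; simp only [Finset.mem_range] at hk; simp only [Finset.mem_Icc]; omega
        · intro i hi; simp only [Finset.mem_Icc] at hi; simp only [Finset.mem_range]; omega
        · intro k hk; simp only [Finset.mem_range] at hk
          rw [Nat.sub_sub_self (by omega : k ≤ n)]
        · intro i hi; simp only [Finset.mem_Icc] at hi
          rw [Nat.sub_sub_self hi.2]
        · intro k hk; simp only [Finset.mem_range] at hk
          rw [Nat.sub_sub_self (by omega : k ≤ n)]
      rw [hsum] at h2
      linear_combination h2
  
/-- The set of elements integrally dependent on `I` forms an ideal of `R`
(the integral closure of `I`). -/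
theorem integral_closure_is_ideal (R : Type*) [CommRing R] (I : Ideal R) :
    ∃ J : Ideal R, ∀ f : R, f ∈ J ↔ IntegrallyDependent I f := by
  refine ⟨{ carrier := {f | (C f * X) ∈ integralClosure (reesAlgebra I) R[X]},
            add_mem' := ?_, zero_mem' := ?_, smul_mem' := ?_ }, ?_⟩
  · intro a b ha hb
    simpa [add_mul] using add_mem ha hb
  · simpa using zero_mem (integralClosure (reesAlgebra I) R[X])
  · intro r f hf
    have hCr : (C r : R[X]) ∈ integralClosure (reesAlgebra I) R[X] :=
      Subalgebra.algebraMap_mem _ (⟨C r, (reesAlgebra I).algebraMap_mem r⟩ : reesAlgebra I)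
    simpa [smul_eq_mul, map_mul, mul_assoc] using mul_mem hCr hf
  · intro f
    exact (integrallyDependent_iff I f).symm
end

section
/- The integral closure of an ideal is integrally closed: for a commutative ring R and ideal I, the integral closure of the integral closure of I equals the integral closure of I. -/
/-- The integral closure of an ideal, as a set. -/
def integralClosureSet {R : Type*} [CommRing R] (I : Ideal R) : Set R :=
  {f | IntegrallyDependent I f}

open Polynomial

set_option synthInstance.maxHeartbeats 1000000
set_option maxHeartbeats 1000000

section Aux

variable {R : Type*} [CommRing R]

/-- If `f` is integrally dependent on `I`, then `f·t` is integral over the Rees algebra. -/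
lemma IntegrallyDependent.to_integral {I : Ideal R} {f : R}
    (h : IntegrallyDependent I f) :
    IsIntegral (reesAlgebra I) ((monomial 1 f : R[X])) := by
  obtain ⟨n, hn, a, ha, heq⟩ := h
  set a' : ℕ → R := fun i => if i ∈ Finset.Icc 1 n then a i else 0 with ha'def
  have ha' : ∀ i, a' i ∈ I ^ i := by
    intro i
    simp only [ha'def]
    split
    · exact ha i ‹_›
    · exact zero_mem _
  have heq' : f ^ n + ∑ i ∈ Finset.Icc 1 n, a' i * f ^ (n - i) = 0 := by
    rw [← heq]
    congr 1
    exact Finset.sum_congr rfl fun i hi => by simp only [ha'def, if_pos hi]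
  set c : ℕ → ↥(reesAlgebra I) :=
    fun i => ⟨monomial i (a' i), reesAlgebra.monomial_mem.mpr (ha' i)⟩ with hc
  refine ⟨X ^ n + ∑ i ∈ Finset.Icc 1 n, C (c i) * X ^ (n - i), ?_, ?_⟩
  · apply monic_X_pow_add
    refine lt_of_le_of_lt (Polynomial.degree_sum_le _ _) ?_
    rw [Finset.sup_lt_iff (by exact_mod_cast WithBot.bot_lt_coe n)]
    intro i hi
    refine lt_of_le_of_lt (degree_C_mul_X_pow_le _ _) ?_
    have hi1 : 1 ≤ i := (Finset.mem_Icc.mp hi).1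
    exact_mod_cast Nat.sub_lt hn hi1
  · simp only [eval₂_add, eval₂_pow, eval₂_X, eval₂_finset_sum, eval₂_mul, eval₂_C]
    have hz : ∀ k : ℕ, (monomial 1 f : R[X]) ^ k = monomial k (f ^ k) := by
      intro k; rw [monomial_pow, one_mul]
    have halg : ∀ i, (algebraMap ↥(reesAlgebra I) R[X]) (c i) = monomial i (a' i) :=
      fun i => rfl
    rw [hz]
    have hsum : ∑ i ∈ Finset.Icc 1 n,
          (algebraMap ↥(reesAlgebra I) R[X]) (c i) * (monomial 1 f : R[X]) ^ (n - i)
        = ∑ i ∈ Finset.Icc 1 n, monomial n (a' i * f ^ (n - i)) := by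
      refine Finset.sum_congr rfl fun i hi => ?_
      rw [halg, hz, monomial_mul_monomial, Nat.add_sub_cancel' (Finset.mem_Icc.mp hi).2]
    rw [hsum, ← map_sum (monomial n), ← map_add (monomial n), heq', map_zero]

/-- If `f·t` is integral over the Rees algebra of `I`,
then `f` is integrally dependent on `I`. -/
lemma IntegrallyDependent.of_integral {I : Ideal R} {f : R}
    (h : IsIntegral (reesAlgebra I) ((monomial 1 f : R[X]))) :
    IntegrallyDependent I f := by
  rcases subsingleton_or_nontrivial R with hR | hR
  · exact ⟨1, one_pos, 0, fun i _ => zero_mem _, Subsingleton.elim _ _⟩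
  obtain ⟨p, hm, hev⟩ := h
  set A := ↥(reesAlgebra I)
  set q : A[X] := p * X with hq
  have hqm : q.Monic := hm.mul monic_X
  have hqev : eval₂ (algebraMap A R[X]) (monomial 1 f) q = 0 := by
    rw [hq, eval₂_mul, hev, zero_mul]
  set n := q.natDegree with hn
  have hn1 : 0 < n := by
    rw [hn, hq, natDegree_mul_X hm.ne_zero]; omega
  refine ⟨n, hn1, fun i => ((q.coeff (n - i) : R[X])).coeff i, fun i hi => ?_, ?_⟩
  · exact (mem_reesAlgebra_iff I _).mp (q.coeff (n - i)).2 i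
  · have hz : ∀ k : ℕ, (monomial 1 f : R[X]) ^ k = monomial k (f ^ k) := by
      intro k; rw [monomial_pow, one_mul]
    have key : (eval₂ (algebraMap A R[X]) (monomial 1 f) q).coeff n = 0 := by
      rw [hqev, coeff_zero]
    rw [eval₂_eq_sum_range, finset_sum_coeff] at key
    have hterm : ∀ j ∈ Finset.range (n + 1),
        ((algebraMap A R[X]) (q.coeff j) * (monomial 1 f : R[X]) ^ j).coeff n
          = ((q.coeff j : R[X])).coeff (n - j) * f ^ j := by
      intro j hj
      have hjn : j ≤ n := Nat.lt_succ_iff.mp (Finset.mem_range.mp hj)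
      have : ((q.coeff j : R[X]) * monomial j (f ^ j)).coeff ((n - j) + j)
          = ((q.coeff j : R[X])).coeff (n - j) * f ^ j := coeff_mul_monomial _ _ _ _
      rw [hz]
      show ((q.coeff j : R[X]) * monomial j (f ^ j)).coeff n = _
      rwa [Nat.sub_add_cancel hjn] at this
    rw [Finset.sum_congr rfl hterm, Finset.sum_range_succ] at key
    have hlead : ((q.coeff n : R[X])).coeff (n - n) * f ^ n = f ^ n := by
      have : q.coeff n = 1 := hqm.coeff_natDegree
      simp [this]
    rw [hlead] at key
    rw [← key]
    rw [add_comm (∑ _ ∈ _, _)]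
    congr 1
    refine Finset.sum_nbij' (fun i => n - i) (fun j => n - j) ?_ ?_ ?_ ?_ ?_
    · intro i hi
      obtain ⟨h1, h2⟩ := Finset.mem_Icc.mp hi
      exact Finset.mem_range.mpr (by omega)
    · intro j hj
      have := Finset.mem_range.mp hj
      exact Finset.mem_Icc.mpr ⟨by omega, by omega⟩
    · intro i hi
      obtain ⟨h1, h2⟩ := Finset.mem_Icc.mp hi
      omega
    · intro j hj
      have := Finset.mem_range.mp hj
      omega
    · intro i hi
      obtain ⟨h1, h2⟩ := Finset.mem_Icc.mp hi
      have h3 : n - (n - i) = i := by omega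
      rw [h3]

lemma mem_to_integral {I : Ideal R} {g : R[X]} (hg : g ∈ reesAlgebra I) :
    IsIntegral (reesAlgebra I) g := by
  have : g = algebraMap ↥(reesAlgebra I) R[X] ⟨g, hg⟩ := rfl
  rw [this]
  exact isIntegral_algebraMap

lemma monomial_pow_mem_integral {I J : Ideal R}
    (hJI : ∀ x ∈ J, IsIntegral (reesAlgebra I) ((monomial 1 x : R[X]))) :
    ∀ i : ℕ, ∀ b ∈ J ^ i, IsIntegral (reesAlgebra I) ((monomial i b : R[X])) := by
  intro i
  induction i with
  | zero =>
    intro b _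
    refine mem_to_integral ?_
    rw [mem_reesAlgebra_iff]
    intro k
    rcases Nat.eq_zero_or_pos k with hk | hk
    · subst hk; simp
    · rw [coeff_monomial, if_neg (by omega)]; exact zero_mem _
  | succ i ih =>
    intro b hb
    rw [pow_succ] at hb
    refine Submodule.mul_induction_on hb (fun x hx y hy => ?_) (fun b₁ b₂ h₁ h₂ => ?_)
    · have : (monomial (i + 1) (x * y) : R[X]) = monomial i x * monomial 1 y := by
        rw [monomial_mul_monomial]
      rw [this]
      exact (ih x hx).mul (hJI y hy)
    · rw [map_add (monomial (i+1))]
      exact h₁.add h₂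

lemma rees_mem_integral {I J : Ideal R}
    (hJI : ∀ x ∈ J, IsIntegral (reesAlgebra I) ((monomial 1 x : R[X])))
    {g : R[X]} (hg : g ∈ reesAlgebra J) :
    g ∈ integralClosure ↥(reesAlgebra I) R[X] := by
  rw [g.as_sum_support]
  refine sum_mem fun i hi => ?_
  exact monomial_pow_mem_integral hJI i _ ((mem_reesAlgebra_iff J g).mp hg i)

lemma trans_integral {I J : Ideal R}
    (hJI : ∀ x ∈ J, IsIntegral (reesAlgebra I) ((monomial 1 x : R[X])))
    {z : R[X]} (hz : IsIntegral (reesAlgebra J) z) :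
    IsIntegral (reesAlgebra I) z := by
  set K := integralClosure ↥(reesAlgebra I) R[X] with hK
  obtain ⟨p, hm, hev⟩ := hz
  set g : ↥(reesAlgebra J) →+* ↥K :=
    { toFun := fun x => ⟨(x : R[X]), rees_mem_integral hJI x.2⟩
      map_one' := rfl
      map_mul' := fun _ _ => rfl
      map_zero' := rfl
      map_add' := fun _ _ => rfl } with hg
  have hzK : IsIntegral ↥K z := by
    refine ⟨p.map g, hm.map g, ?_⟩
    rw [eval₂_map]
    have : (algebraMap ↥K R[X]).comp g = algebraMap ↥(reesAlgebra J) R[X] :=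
      RingHom.ext fun x => rfl
    rw [this, hev]
  exact isIntegral_trans (A := ↥K) z hzK

end Aux

/-- The integral closure of an ideal is integrally closed: if `J` is an ideal whose
underlying set is the integral closure of `I`, then the integral closure of `J`
equals the integral closure of `I`. -/
theorem integralClosure_idempotent (R : Type*) [CommRing R] [IsNoetherianRing R]
    (I J : Ideal R) (hJ : (J : Set R) = integralClosureSet I) :
    integralClosureSet J = integralClosureSet I := by
  ext f
  constructor
  · intro hf
    have hz : IsIntegral (reesAlgebra J) ((monomial 1 f : R[X])) :=
      IntegrallyDependent.to_integral hf
    have hJI : ∀ x ∈ J, IsIntegral (reesAlgebra I) ((monomial 1 x : R[X])) := by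
      intro x hx
      have : x ∈ integralClosureSet I := by
        rw [← hJ]; exact hx
      exact IntegrallyDependent.to_integral this
    exact IntegrallyDependent.of_integral (trans_integral hJI hz)
  · intro hf
    have hfJ : f ∈ J := by
      rw [← SetLike.mem_coe, hJ]; exact hf
    refine ⟨1, one_pos, fun _ => -f, fun i hi => ?_, ?_⟩
    · have : i = 1 := by
        have := Finset.mem_Icc.mp hi; omega
      subst this
      rw [pow_one]
      exact neg_mem hfJ
    · simp
end
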